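/- arXiv:1812.03579 — 3 statements merged into one kernel-verified Lean document; each statement's English description precedes it below -/
import Mathlib

section
/- For an exponentially distributed real random variable ξ with mean μ > 0 and constants a ≥ 0, b > 0, the expectation E[log₂(a + bξ)] satisfies log₂(a + bμ) − γ·log₂(e) ≤ E[log₂(a + bξ)] ≤ log₂(a + bμ), where γ is the Euler–Mascheroni constant. -/
/-! Both bounds are Jensen's inequality, applied through supporting lines at the mean `m = E ξ`.
The concavity of `log` gives `E log (a + b ξ) ≤ log (a + b m)`. For the lower bound, the function
`x ↦ log (a + b x) - log x = log (b + a / x)` is convex on `(0, ∞)`, which gives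
`E log (a + b ξ) ≥ log (a + b m) + E log ξ - log m`. Rescaling to the standard exponential law,
`m = μ` and `E log ξ = log μ - γ`, since `∫₀^∞ log t e^{-t} dt = Γ'(1) = -γ`. -/

open MeasureTheory ProbabilityTheory Real Set Filter

section Tangent

variable {a b m x : ℝ}

lemma log_add_mul_le_tangent_line (hx : 0 < a + b * x) (hm : 0 < a + b * m) :
    log (a + b * x) ≤ log (a + b * m) + b / (a + b * m) * (x - m) := by
  have h := log_le_sub_one_of_pos (div_pos hx hm)
  rw [log_div hx.ne' hm.ne'] at h
  have hratio : (a + b * x) / (a + b * m) - 1 = b / (a + b * m) * (x - m) := by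
    field_simp
    ring
  linarith

lemma tangent_line_le_log_add_mul_sub_log (ha : 0 ≤ a) (hb : 0 < b) (hm : 0 < m) (hx : 0 < x) :
    log (a + b * m) - log m - a / (m * (a + b * m)) * (x - m) ≤ log (a + b * x) - log x := by
  have hcm : 0 < a + b * m := by positivity
  have hcx : 0 < a + b * x := by positivity
  have h := log_le_sub_one_of_pos
    (show 0 < (a + b * m) * x / ((a + b * x) * m) by positivity)
  rw [log_div (by positivity) (by positivity), log_mul hcm.ne' hx.ne', log_mul hcx.ne' hm.ne'] at h
  have hgap : a / (m * (a + b * m)) * (x - m) - ((a + b * m) * x / ((a + b * x) * m) - 1)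
      = a * b * (x - m) ^ 2 / ((a + b * x) * m * (a + b * m)) := by
    field_simp
    ring
  have : 0 ≤ a * b * (x - m) ^ 2 / ((a + b * x) * m * (a + b * m)) := by positivity
  linarith

end Tangent

lemma integral_pos_of_ae_pos {α : Type*} [MeasurableSpace α] {ν : Measure α} [NeZero ν]
    {f : α → ℝ} (hf : ∀ᵐ x ∂ν, 0 < f x) (hi : Integrable f ν) :
    0 < ∫ x, f x ∂ν := by
  rw [integral_pos_iff_support_of_nonneg_ae (hf.mono fun _ h => h.le) hi]
  refine pos_iff_ne_zero.2 fun h0 => ?_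
  have : ∀ᵐ x ∂ν, False := by
    filter_upwards [hf, measure_eq_zero_iff_ae_notMem.1 h0] with x hx hx'
    exact hx' (ne_of_gt hx)
  exact NeZero.ne ν (by simpa using this)

section SupportingLine

variable {ν : Measure ℝ} {c s : ℝ}

lemma integrable_const_add_mul_sub [IsFiniteMeasure ν] (hid : Integrable (fun x => x) ν)
    (t : ℝ) :
    Integrable (fun x => c + s * (x - t)) ν := by
  have hsub : Integrable (fun x => x - t) ν := hid.sub (integrable_const t)
  exact (integrable_const c).add (hsub.const_mul s)

variable [IsProbabilityMeasure ν]

lemma integral_const_add_mul_sub_integral (hid : Integrable (fun x => x) ν) :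
    ∫ x, (c + s * (x - ∫ y, y ∂ν)) ∂ν = c := by
  have hsub : Integrable (fun x => x - ∫ y, y ∂ν) ν := hid.sub (integrable_const _)
  rw [integral_add (integrable_const c) (hsub.const_mul s), integral_const_mul,
    integral_sub hid (integrable_const _)]
  simp

variable {a b : ℝ}

lemma integrable_log_add_mul (ha : 0 ≤ a) (hb : 0 < b) (hpos : ∀ᵐ x ∂ν, 0 < x)
    (hid : Integrable (fun x => x) ν) (hlog : Integrable log ν) :
    Integrable (fun x => log (a + b * x)) ν := by
  set m := ∫ y, y ∂ν
  have hm : 0 < m := integral_pos_of_ae_pos hpos hid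
  refine integrable_of_le_of_le (g₁ := fun x => log x + (log (a + b * m) - log m
      + -(a / (m * (a + b * m))) * (x - m)))
    (g₂ := fun x => log (a + b * m) + b / (a + b * m) * (x - m))
    (measurable_log.comp (by fun_prop)).aestronglyMeasurable ?_ ?_
    (hlog.add (integrable_const_add_mul_sub hid m)) (integrable_const_add_mul_sub hid m)
  · filter_upwards [hpos] with x hx
    have := tangent_line_le_log_add_mul_sub_log ha hb hm hx
    linarith
  · filter_upwards [hpos] with x hx
    exact log_add_mul_le_tangent_line (by positivity) (by positivity)

lemma integral_log_add_mul_le (ha : 0 ≤ a) (hb : 0 < b) (hpos : ∀ᵐ x ∂ν, 0 < x)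
    (hid : Integrable (fun x => x) ν) (hlog : Integrable log ν) :
    ∫ x, log (a + b * x) ∂ν ≤ log (a + b * ∫ x, x ∂ν) := by
  set m := ∫ y, y ∂ν
  have hm : 0 < m := integral_pos_of_ae_pos hpos hid
  calc ∫ x, log (a + b * x) ∂ν
      ≤ ∫ x, (log (a + b * m) + b / (a + b * m) * (x - m)) ∂ν := by
        refine integral_mono_ae (integrable_log_add_mul ha hb hpos hid hlog)
          (integrable_const_add_mul_sub hid _) ?_
        filter_upwards [hpos] with x hx
        exact log_add_mul_le_tangent_line (by positivity) (by positivity)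
    _ = log (a + b * m) := integral_const_add_mul_sub_integral hid

lemma log_add_mul_integral_add_integral_log_sub_log_le (ha : 0 ≤ a) (hb : 0 < b)
    (hpos : ∀ᵐ x ∂ν, 0 < x) (hid : Integrable (fun x => x) ν) (hlog : Integrable log ν) :
    log (a + b * ∫ x, x ∂ν) + ∫ x, log x ∂ν - log (∫ x, x ∂ν)
      ≤ ∫ x, log (a + b * x) ∂ν := by
  set m := ∫ y, y ∂ν
  have hm : 0 < m := integral_pos_of_ae_pos hpos hid
  have hdiff := (integrable_log_add_mul ha hb hpos hid hlog).sub hlog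
  have hsupp : log (a + b * m) - log m ≤ ∫ x, (log (a + b * x) - log x) ∂ν :=
    calc log (a + b * m) - log m
        = ∫ x, (log (a + b * m) - log m + -(a / (m * (a + b * m))) * (x - m)) ∂ν :=
          (integral_const_add_mul_sub_integral hid).symm
      _ ≤ ∫ x, (log (a + b * x) - log x) ∂ν := by
          refine integral_mono_ae (integrable_const_add_mul_sub hid _) hdiff ?_
          filter_upwards [hpos] with x hx
          have := tangent_line_le_log_add_mul_sub_log ha hb hm hx
          linarith
  rw [integral_sub (integrable_log_add_mul ha hb hpos hid hlog) hlog] at hsupp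
  linarith

end SupportingLine

section Exponential

variable {r : ℝ} {E : Type*} [NormedAddCommGroup E] [NormedSpace ℝ E]

lemma integral_expMeasure (hr : 0 < r) (g : ℝ → E) :
    ∫ x, g x ∂expMeasure r = ∫ x in Ioi 0, (r * exp (-(r * x))) • g x := by
  have hdensity : ∀ x, (exponentialPDF r x).toReal • g x
      = (Ici 0).indicator (fun x => (r * exp (-(r * x))) • g x) x := by
    intro x
    by_cases hx : 0 ≤ x
    · rw [exponentialPDF_of_nonneg hx, ENNReal.toReal_ofReal (by positivity),
        indicator_of_mem (mem_Ici.2 hx)]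
    · rw [exponentialPDF_of_neg (not_le.1 hx), indicator_of_notMem (notMem_Ici.2 (not_le.1 hx))]
      simp
  change ∫ x, g x ∂volume.withDensity (exponentialPDF r) = _
  rw [integral_withDensity_eq_integral_toReal_smul (show Measurable (exponentialPDF r) from
    (measurable_exponentialPDFReal r).ennreal_ofReal) (ae_of_all _ fun _ => ENNReal.ofReal_lt_top)]
  simp_rw [hdensity]
  rw [integral_indicator measurableSet_Ici, integral_Ici_eq_integral_Ioi]

lemma integral_expMeasure_eq_integral_expMeasure_one (hr : 0 < r) (g : ℝ → E) :
    ∫ x, g x ∂expMeasure r = ∫ x, g (r⁻¹ * x) ∂expMeasure 1 := by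
  rw [integral_expMeasure hr, integral_expMeasure one_pos]
  have := integral_comp_mul_left_Ioi (fun u => exp (-u) • g (r⁻¹ * u)) 0 hr
  simp only [mul_zero, inv_mul_cancel_left₀ hr.ne'] at this
  simp only [one_mul, mul_smul, integral_smul, this, smul_inv_smul₀ hr.ne']

lemma ae_pos_expMeasure (hr : 0 < r) : ∀ᵐ x ∂expMeasure r, 0 < x := by
  have := isProbabilityMeasure_expMeasure hr
  have h : (expMeasure r).real (Iic 0) = 0 := by
    rw [← cdf_eq_real, cdf_expMeasure_eq hr]
    simp
  rw [ae_iff]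
  simp only [not_lt]
  exact (measureReal_eq_zero_iff (measure_ne_top _ _)).1 h

lemma integral_id_expMeasure (hr : 0 < r) : ∫ x, x ∂expMeasure r = r⁻¹ := by
  have h := integral_rpow_mul_exp_neg_mul_Ioi two_pos hr
  norm_num [Gamma_two] at h
  rw [integral_expMeasure hr]
  simp only [smul_eq_mul, mul_assoc, integral_const_mul, mul_comm (rexp _)]
  rw [h]
  field_simp

lemma integrable_id_expMeasure (hr : 0 < r) : Integrable (fun x => x) (expMeasure r) :=
  .of_integral_ne_zero (by rw [integral_id_expMeasure hr]; positivity)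

lemma integral_log_mul_exp_neg_Ioi :
    ∫ t in Ioi 0, log t * exp (-t) = -eulerMascheroniConstant := by
  have hGamma : Complex.GammaIntegral =ᶠ[nhds 1] Complex.Gamma :=
    eventually_of_mem ((isOpen_lt continuous_const Complex.continuous_re).mem_nhds
      (by simp : (0 : ℝ) < (1 : ℂ).re)) fun s hs => (Complex.Gamma_eq_integral hs).symm
  have hderiv := ((Complex.hasDerivAt_GammaIntegral (s := 1) (by simp)).congr_of_eventuallyEq
    hGamma.symm).real_of_complex
  simp only [sub_self, Complex.cpow_zero, one_mul, ← Complex.ofReal_mul, integral_complex_ofReal,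
    Complex.ofReal_re, Complex.Gamma_ofReal] at hderiv
  exact hderiv.unique hasDerivAt_Gamma_one

lemma integral_log_expMeasure_one : ∫ x, log x ∂expMeasure 1 = -eulerMascheroniConstant := by
  rw [integral_expMeasure one_pos]
  simp only [one_mul, smul_eq_mul, mul_comm (rexp _)]
  exact integral_log_mul_exp_neg_Ioi

lemma integrable_log_expMeasure_one : Integrable log (expMeasure 1) :=
  .of_integral_ne_zero (by
    rw [integral_log_expMeasure_one, neg_ne_zero]
    exact (one_half_pos.trans one_half_lt_eulerMascheroniConstant).ne')

end Exponential

lemma integral_log_add_mul_expMeasure_one_bounds {a b : ℝ} (ha : 0 ≤ a) (hb : 0 < b) :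
    log (a + b) - eulerMascheroniConstant ≤ ∫ x, log (a + b * x) ∂expMeasure 1 ∧
      ∫ x, log (a + b * x) ∂expMeasure 1 ≤ log (a + b) := by
  have := isProbabilityMeasure_expMeasure one_pos
  have hpos := ae_pos_expMeasure one_pos
  have hid := integrable_id_expMeasure one_pos
  have hlog := integrable_log_expMeasure_one
  have hlower := log_add_mul_integral_add_integral_log_sub_log_le ha hb hpos hid hlog
  have hupper := integral_log_add_mul_le ha hb hpos hid hlog
  rw [integral_id_expMeasure one_pos, inv_one, mul_one] at hlower hupper
  rw [integral_log_expMeasure_one, log_one, sub_zero] at hlower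
  exact ⟨by linarith, hupper⟩

/-- For an exponentially distributed real random variable `ξ` with mean `μ > 0` and constants
`a ≥ 0`, `b > 0`, we have
`log₂(a + bμ) − γ·log₂ e ≤ E[log₂(a + bξ)] ≤ log₂(a + bμ)`,
where `γ` is the Euler–Mascheroni constant. -/
theorem exp_logb_expectation_bounds
    {Ω : Type*} [MeasureSpace Ω] {P : Measure Ω} [IsProbabilityMeasure P]
    (ξ : Ω → ℝ) (μ a b : ℝ) (hμ : 0 < μ) (ha : 0 ≤ a) (hb : 0 < b)
    (hlaw : Measure.map ξ P = ProbabilityTheory.expMeasure (1 / μ)) :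
    Real.logb 2 (a + b * μ) - Real.eulerMascheroniConstant * Real.logb 2 (Real.exp 1)
        ≤ ∫ ω, Real.logb 2 (a + b * ξ ω) ∂P ∧
      ∫ ω, Real.logb 2 (a + b * ξ ω) ∂P ≤ Real.logb 2 (a + b * μ) := by
  have hξ : AEMeasurable ξ P := by
    by_contra h
    rw [Measure.map_of_not_aemeasurable h] at hlaw
    exact (isProbabilityMeasure_expMeasure (one_div_pos.2 hμ)).ne_zero _ hlaw.symm
  have hlog2 : 0 < log 2 := log_pos one_lt_two
  have hE : ∫ ω, logb 2 (a + b * ξ ω) ∂P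
      = (∫ x, log (a + b * μ * x) ∂expMeasure 1) / log 2 := by
    rw [← integral_map (f := fun x => logb 2 (a + b * x)) hξ
      ((measurable_log.comp (by fun_prop)).div_const _).aestronglyMeasurable, hlaw,
      integral_expMeasure_eq_integral_expMeasure_one (one_div_pos.2 hμ), ← integral_div]
    simp only [one_div, inv_inv, logb, mul_assoc]
  obtain ⟨hlower, hupper⟩ := integral_log_add_mul_expMeasure_one_bounds ha (mul_pos hb hμ)
  rw [hE, logb, logb, log_exp, ← div_eq_mul_one_div, ← sub_div]
  exact ⟨div_le_div_of_nonneg_right hlower hlog2.le, div_le_div_of_nonneg_right hupper hlog2.le⟩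
end

section
/- Consider the linear system in nonnegative variables R_c1, R_c2, R_p1, R_p2 with constraints R_c2 ≤ A₁, R_p1 ≤ A₂, R_c1 + R_c2 + R_p1 ≤ A₃, R_c1 ≤ B₁, R_p2 ≤ B₂, R_c1 + R_c2 + R_p2 ≤ B₃, for nonnegative constants A₁, A₂, A₃, B₁, B₂, B₃. Then the projection onto (R₁, R₂) = (R_c1 + R_p1, R_c2 + R_p2) contains exactly those nonnegative pairs satisfying: R₁ ≤ A₃, R₁ ≤ B₁ + A₂, R₂ ≤ B₃, R₂ ≤ A₁ + B₂, R₁ + R₂ ≤ A₂ + B₃, and R₁ + R₂ ≤ B₂ + A₃. -/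
/-! Every achievable pair of total rates visibly satisfies the six bounds (each is a sum of two
of the original constraints). Conversely, given such a pair, give each user as much private
rate as its private cap allows, `R_p1 = min R₁ A₂` and `R_p2 = min R₂ B₂`, and carry the excess
`(R₁ - A₂)⁺`, `(R₂ - B₂)⁺` as common rate; each original constraint then reduces to one or two
of the six bounds. -/

section SplitAtLevel

variable {α : Type*} [AddCommGroup α] [LinearOrder α] [IsOrderedAddMonoid α]

theorem max_sub_zero_add_min (x a : α) : max (x - a) 0 + min x a = x := by
  rcases le_total x a with hxa | hax
  · rw [max_eq_right (sub_nonpos.mpr hxa), min_eq_left hxa, zero_add]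
  · rw [max_eq_left (sub_nonneg.mpr hax), min_eq_right hax, sub_add_cancel]

theorem max_sub_zero_le_iff {x a b : α} : max (x - a) 0 ≤ b ↔ x ≤ b + a ∧ 0 ≤ b := by
  rw [max_le_iff, sub_le_iff_le_add]

theorem add_max_zero_le_iff {x y c : α} : x + max y 0 ≤ c ↔ x + y ≤ c ∧ x ≤ c := by
  rw [add_max, add_zero, max_le_iff]

end SplitAtLevel

section RateRegion

variable {α : Type*} [Field α] [LinearOrder α] [IsStrictOrderedRing α]
  {A1 A2 A3 B1 B2 B3 : α}

theorem total_rate_bounds_of_exists_split {R1 R2 : α}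
    (h : ∃ Rc1 Rc2 Rp1 Rp2 : α,
      0 ≤ Rc1 ∧ 0 ≤ Rc2 ∧ 0 ≤ Rp1 ∧ 0 ≤ Rp2 ∧
      Rc2 ≤ A1 ∧ Rp1 ≤ A2 ∧ Rc1 + Rc2 + Rp1 ≤ A3 ∧
      Rc1 ≤ B1 ∧ Rp2 ≤ B2 ∧ Rc1 + Rc2 + Rp2 ≤ B3 ∧
      R1 = Rc1 + Rp1 ∧ R2 = Rc2 + Rp2) :
    0 ≤ R1 ∧ 0 ≤ R2 ∧ R1 ≤ A3 ∧ R1 ≤ B1 + A2 ∧ R2 ≤ B3 ∧ R2 ≤ A1 + B2 ∧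
      R1 + R2 ≤ A2 + B3 ∧ R1 + R2 ≤ B2 + A3 := by
  obtain ⟨Rc1, Rc2, Rp1, Rp2, hc1, hc2, hp1, hp2, hA1, hA2, hA3, hB1, hB2, hB3, rfl, rfl⟩ := h
  refine ⟨?_, ?_, ?_, ?_, ?_, ?_, ?_, ?_⟩ <;> linarith

theorem exists_split_of_total_rate_bounds (hA1 : 0 ≤ A1) (hA2 : 0 ≤ A2)
    (hB1 : 0 ≤ B1) (hB2 : 0 ≤ B2) {R1 R2 : α}
    (h : 0 ≤ R1 ∧ 0 ≤ R2 ∧ R1 ≤ A3 ∧ R1 ≤ B1 + A2 ∧ R2 ≤ B3 ∧ R2 ≤ A1 + B2 ∧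
      R1 + R2 ≤ A2 + B3 ∧ R1 + R2 ≤ B2 + A3) :
    ∃ Rc1 Rc2 Rp1 Rp2 : α,
      0 ≤ Rc1 ∧ 0 ≤ Rc2 ∧ 0 ≤ Rp1 ∧ 0 ≤ Rp2 ∧
      Rc2 ≤ A1 ∧ Rp1 ≤ A2 ∧ Rc1 + Rc2 + Rp1 ≤ A3 ∧
      Rc1 ≤ B1 ∧ Rp2 ≤ B2 ∧ Rc1 + Rc2 + Rp2 ≤ B3 ∧
      R1 = Rc1 + Rp1 ∧ R2 = Rc2 + Rp2 := by
  obtain ⟨hR1, hR2, hR1A3, hR1B1, hR2B3, hR2A1, hsumB3, hsumA3⟩ := h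
  have split1 := max_sub_zero_add_min R1 A2
  have split2 := max_sub_zero_add_min R2 B2
  refine ⟨max (R1 - A2) 0, max (R2 - B2) 0, min R1 A2, min R2 B2,
    le_max_right _ _, le_max_right _ _, le_min hR1 hA2, le_min hR2 hB2,
    max_sub_zero_le_iff.mpr ⟨hR2A1, hA1⟩, min_le_right _ _, ?_,
    max_sub_zero_le_iff.mpr ⟨hR1B1, hB1⟩, min_le_right _ _, ?_, split1.symm, split2.symm⟩
  · rw [add_right_comm, split1, add_max_zero_le_iff]
    exact ⟨by linarith, hR1A3⟩
  · rw [add_assoc, split2, add_comm, add_max_zero_le_iff]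
    exact ⟨by linarith, hR2B3⟩

end RateRegion

theorem fourier_motzkin_projection_general (A1 A2 A3 B1 B2 B3 : ℝ)
    (hA1 : 0 ≤ A1) (hA2 : 0 ≤ A2)
    (hB1 : 0 ≤ B1) (hB2 : 0 ≤ B2) :
    {p : ℝ × ℝ | ∃ Rc1 Rc2 Rp1 Rp2 : ℝ,
        0 ≤ Rc1 ∧ 0 ≤ Rc2 ∧ 0 ≤ Rp1 ∧ 0 ≤ Rp2 ∧
        Rc2 ≤ A1 ∧ Rp1 ≤ A2 ∧ Rc1 + Rc2 + Rp1 ≤ A3 ∧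
        Rc1 ≤ B1 ∧ Rp2 ≤ B2 ∧ Rc1 + Rc2 + Rp2 ≤ B3 ∧
        p.1 = Rc1 + Rp1 ∧ p.2 = Rc2 + Rp2}
      = {p : ℝ × ℝ | 0 ≤ p.1 ∧ 0 ≤ p.2 ∧
          p.1 ≤ A3 ∧ p.1 ≤ B1 + A2 ∧ p.2 ≤ B3 ∧ p.2 ≤ A1 + B2 ∧
          p.1 + p.2 ≤ A2 + B3 ∧ p.1 + p.2 ≤ B2 + A3} := by
  ext ⟨R1, R2⟩
  exact ⟨total_rate_bounds_of_exists_split, exists_split_of_total_rate_bounds hA1 hA2 hB1 hB2⟩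

/-- Fourier–Motzkin elimination: the projection of the six-constraint region in
nonnegative `(R_c1, R_c2, R_p1, R_p2)` onto `(R₁, R₂) = (R_c1 + R_p1, R_c2 + R_p2)`
is exactly the set of nonnegative pairs satisfying the six stated inequalities. -/
theorem fourier_motzkin_projection (A1 A2 A3 B1 B2 B3 : ℝ)
    (hA1 : 0 ≤ A1) (hA2 : 0 ≤ A2) (hA3 : 0 ≤ A3)
    (hB1 : 0 ≤ B1) (hB2 : 0 ≤ B2) (hB3 : 0 ≤ B3) :
    {p : ℝ × ℝ | ∃ Rc1 Rc2 Rp1 Rp2 : ℝ,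
        0 ≤ Rc1 ∧ 0 ≤ Rc2 ∧ 0 ≤ Rp1 ∧ 0 ≤ Rp2 ∧
        Rc2 ≤ A1 ∧ Rp1 ≤ A2 ∧ Rc1 + Rc2 + Rp1 ≤ A3 ∧
        Rc1 ≤ B1 ∧ Rp2 ≤ B2 ∧ Rc1 + Rc2 + Rp2 ≤ B3 ∧
        p.1 = Rc1 + Rp1 ∧ p.2 = Rc2 + Rp2}
      = {p : ℝ × ℝ | 0 ≤ p.1 ∧ 0 ≤ p.2 ∧
          p.1 ≤ A3 ∧ p.1 ≤ B1 + A2 ∧ p.2 ≤ B3 ∧ p.2 ≤ A1 + B2 ∧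
          p.1 + p.2 ≤ A2 + B3 ∧ p.1 + p.2 ≤ B2 + A3} :=
  fourier_motzkin_projection_general A1 A2 A3 B1 B2 B3 hA1 hA2 hB1 hB2
end

section
/- For T ≥ 2 and fixed 0 ≤ α ≤ 1, the training-based scheme's symmetric gDoF (1−2/T)·min{1, (max(1,α)+max(1−α,0))/2, max(1−α,α), (max(1,α)+max(1−α,α)+max(1−α,0))/3} is at most (1 − 2/T), and at α = 0 equals (1 − 2/T), which is strictly less than the TIN symmetric gDoF (1 − 1/T) at α = 0 for every T ≥ 3. -/
/-- For integer `T ≥ 2` and `0 ≤ α ≤ 1`, the training-based symmetric gDoF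
`(1−2/T)·min{1, (max(1,α)+max(1−α,0))/2, max(1−α,α), (max(1,α)+max(1−α,α)+max(1−α,0))/3}`
is at most `1 − 2/T`; at `α = 0` it equals `1 − 2/T`; and for every `T ≥ 3` this is
strictly less than the TIN symmetric gDoF `1 − 1/T` at `α = 0`. -/
theorem training_symmetric_gdof (T : ℕ) (hT : 2 ≤ T) (α : ℝ) (hα0 : 0 ≤ α) (hα1 : α ≤ 1) :
    (let dtrain : ℝ → ℝ := fun a =>
      (1 - 2 / (T : ℝ)) *
        min (min 1 ((max 1 a + max (1 - a) 0) / 2))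
          (min (max (1 - a) a) ((max 1 a + max (1 - a) a + max (1 - a) 0) / 3))
     dtrain α ≤ 1 - 2 / (T : ℝ) ∧
       dtrain 0 = 1 - 2 / (T : ℝ) ∧
       (3 ≤ T → 1 - 2 / (T : ℝ) < 1 - 1 / (T : ℝ))) := by
  have hT2 : (2 : ℝ) ≤ (T : ℝ) := by exact_mod_cast hT
  have hTpos : (0 : ℝ) < (T : ℝ) := by linarith
  have hfac : (0 : ℝ) ≤ 1 - 2 / (T : ℝ) := by
    rw [sub_nonneg, div_le_one hTpos]; exact hT2
  refine ⟨?_, ?_, ?_⟩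
  · have hmin : min (min 1 ((max 1 α + max (1 - α) 0) / 2))
          (min (max (1 - α) α) ((max 1 α + max (1 - α) α + max (1 - α) 0) / 3)) ≤ 1 :=
      le_trans (min_le_left _ _) (min_le_left _ _)
    calc (1 - 2 / (T : ℝ)) * _ ≤ (1 - 2 / (T : ℝ)) * 1 := by
          exact mul_le_mul_of_nonneg_left hmin hfac
      _ = 1 - 2 / (T : ℝ) := mul_one _
  · norm_num
  · intro h3
    have h3' : (3 : ℝ) ≤ (T : ℝ) := by exact_mod_cast h3
    have : 1 / (T : ℝ) < 2 / (T : ℝ) := by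
      exact div_lt_div_of_pos_right (by norm_num) hTpos
    linarith
end
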